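/- arXiv:0801.1568 — 2 statements merged into one kernel-verified Lean document; each statement's English description precedes it below -/
import Mathlib

section
/- Let γ : ℝ → ℝ³ be smooth with γ'(t) and γ''(t) linearly independent for every t. Then the image of γ lies in an affine plane (i.e. there exist n ∈ ℝ³, n ≠ 0, and c ∈ ℝ with ⟨γ(t), n⟩ = c for all t) if and only if det(γ'(t), γ''(t), γ'''(t)) = 0 for all t. -/
open scoped RealInnerProductSpace
noncomputable section
/-- The cross product on Euclidean ℝ³. -/
def cross3 (a b : EuclideanSpace ℝ (Fin 3)) : EuclideanSpace ℝ (Fin 3) :=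
  (WithLp.equiv 2 (Fin 3 → ℝ)).symm ![a 1 * b 2 - a 2 * b 1, a 2 * b 0 - a 0 * b 2, a 0 * b 1 - a 1 * b 0]
/-- The scalar triple product `det(a,b,c) = (a × b) · c`. -/
def det3 (a b c : EuclideanSpace ℝ (Fin 3)) : ℝ := ⟪cross3 a b, c⟫
local notation "E3" => EuclideanSpace ℝ (Fin 3)
lemma inner3 (x y : E3) : ⟪x, y⟫ = x 0 * y 0 + x 1 * y 1 + x 2 * y 2 := by
  simp [PiLp.inner_apply, Fin.sum_univ_three, RCLike.inner_apply]; ring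
lemma cross3_zero' (a b : E3) : cross3 a b 0 = a 1 * b 2 - a 2 * b 1 := rfl
lemma cross3_one' (a b : E3) : cross3 a b 1 = a 2 * b 0 - a 0 * b 2 := rfl
lemma cross3_two' (a b : E3) : cross3 a b 2 = a 0 * b 1 - a 1 * b 0 := rfl
lemma inner_cross_left (a b : E3) : ⟪cross3 a b, a⟫ = 0 := by
  rw [inner3, cross3_zero', cross3_one', cross3_two']; ring
lemma inner_cross_right (a b : E3) : ⟪cross3 a b, b⟫ = 0 := by
  rw [inner3, cross3_zero', cross3_one', cross3_two']; ring
lemma cross3_self (a : E3) : cross3 a a = 0 := by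
  refine PiLp.ext fun i => ?_
  fin_cases i
  · show a 1 * a 2 - a 2 * a 1 = (0 : E3) 0
    simp [mul_comm]
  · show a 2 * a 0 - a 0 * a 2 = (0 : E3) 1
    simp [mul_comm]
  · show a 0 * a 1 - a 1 * a 0 = (0 : E3) 2
    simp [mul_comm]
lemma ne_exists3 (n : E3) (hn : n ≠ 0) : ∃ k : Fin 3, n k ≠ 0 := by
  by_contra h
  push_neg at h
  exact hn (PiLp.ext fun i => by simpa using h i)
/-- If `z × n = 0` and `n ≠ 0` then `z` is a multiple of `n`. -/
lemma exists_smul_of_cross_eq_zero {z n : E3} (hn : n ≠ 0) (h : cross3 z n = 0) :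
    ∃ r : ℝ, z = r • n := by
  obtain ⟨k, hk⟩ := ne_exists3 n hn
  have h0 : z 1 * n 2 - z 2 * n 1 = 0 := by
    have := congrArg (fun w : E3 => w 0) h; simpa [cross3_zero'] using this
  have h1 : z 2 * n 0 - z 0 * n 2 = 0 := by
    have := congrArg (fun w : E3 => w 1) h; simpa [cross3_one'] using this
  have h2 : z 0 * n 1 - z 1 * n 0 = 0 := by
    have := congrArg (fun w : E3 => w 2) h; simpa [cross3_two'] using this
  have key : ∀ i : Fin 3, z i * n k = z k * n i := by
    intro i
    fin_cases k <;> fin_cases i <;> simp <;> linarith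
  refine ⟨z k / n k, PiLp.ext fun i => ?_⟩
  have hs : ((z k / n k) • n) i = z k / n k * n i := rfl
  rw [hs, div_mul_eq_mul_div, eq_div_iff hk]
  linarith [key i]
/-- If `x ⊥ n` and `y ⊥ n` then `(x × y) × n = 0`. -/
lemma cross_cross_eq_zero {x y n : E3} (hx : ⟪x, n⟫ = 0) (hy : ⟪y, n⟫ = 0) :
    cross3 (cross3 x y) n = 0 := by
  rw [inner3] at hx hy
  refine PiLp.ext fun i => ?_
  fin_cases i
  · show cross3 x y 1 * n 2 - cross3 x y 2 * n 1 = (0 : E3) 0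
    rw [cross3_one', cross3_two']
    simp only [PiLp.zero_apply]
    linear_combination (y 0) * hx - (x 0) * hy
  · show cross3 x y 2 * n 0 - cross3 x y 0 * n 2 = (0 : E3) 1
    rw [cross3_two', cross3_zero']
    simp only [PiLp.zero_apply]
    linear_combination (y 1) * hx - (x 1) * hy
  · show cross3 x y 0 * n 1 - cross3 x y 1 * n 0 = (0 : E3) 2
    rw [cross3_zero', cross3_one']
    simp only [PiLp.zero_apply]
    linear_combination (y 2) * hx - (x 2) * hy
lemma cross_ne_zero_of_li {a b : E3} (h : LinearIndependent ℝ ![a, b]) :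
    cross3 a b ≠ 0 := by
  intro h0
  rw [linearIndependent_fin2] at h
  obtain ⟨hb, hab⟩ := h
  simp only [Matrix.cons_val_one, Matrix.head_cons, Matrix.cons_val_zero] at hb hab
  obtain ⟨r, hr⟩ := exists_smul_of_cross_eq_zero hb h0
  exact hab r hr.symm
lemma comp_hasDerivAt3 {w : ℝ → E3} {w' : E3} {t : ℝ} (hw : HasDerivAt w w' t) (i : Fin 3) :
    HasDerivAt (fun s => w s i) (w' i) t :=
  (EuclideanSpace.proj (𝕜 := ℝ) i).hasFDerivAt.comp_hasDerivAt t hw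
lemma hasDerivAt_cross {u v : ℝ → E3} {u' v' : E3} {t : ℝ}
    (hu : HasDerivAt u u' t) (hv : HasDerivAt v v' t) :
    HasDerivAt (fun s => cross3 (u s) (v s)) (cross3 u' (v t) + cross3 (u t) v') t := by
  have h0 := ((comp_hasDerivAt3 hu 1).mul (comp_hasDerivAt3 hv 2)).sub
    ((comp_hasDerivAt3 hu 2).mul (comp_hasDerivAt3 hv 1))
  have h1 := ((comp_hasDerivAt3 hu 2).mul (comp_hasDerivAt3 hv 0)).sub
    ((comp_hasDerivAt3 hu 0).mul (comp_hasDerivAt3 hv 2))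
  have h2 := ((comp_hasDerivAt3 hu 0).mul (comp_hasDerivAt3 hv 1)).sub
    ((comp_hasDerivAt3 hu 1).mul (comp_hasDerivAt3 hv 0))
  have hw : HasDerivAt
      (fun s => ![u s 1 * v s 2 - u s 2 * v s 1, u s 2 * v s 0 - u s 0 * v s 2,
        u s 0 * v s 1 - u s 1 * v s 0])
      ![u' 1 * v t 2 + u t 1 * v' 2 - (u' 2 * v t 1 + u t 2 * v' 1),
        u' 2 * v t 0 + u t 2 * v' 0 - (u' 0 * v t 2 + u t 0 * v' 2),
        u' 0 * v t 1 + u t 0 * v' 1 - (u' 1 * v t 0 + u t 1 * v' 0)] t := by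
    rw [hasDerivAt_pi]
    intro i
    fin_cases i
    · simpa [Pi.mul_def, Pi.sub_def] using h0
    · simpa [Pi.mul_def, Pi.sub_def] using h1
    · simpa [Pi.mul_def, Pi.sub_def] using h2
  have hL := ((PiLp.continuousLinearEquiv 2 ℝ (fun _ : Fin 3 => ℝ)).symm :
      (Fin 3 → ℝ) →L[ℝ] E3).hasFDerivAt.comp_hasDerivAt t hw
  refine hL.congr_deriv (Eq.symm ?_)
  refine PiLp.ext fun i => ?_
  fin_cases i
  · show cross3 u' (v t) 0 + cross3 (u t) v' 0 = _
    rw [cross3_zero', cross3_zero']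
    show _ = u' 1 * v t 2 + u t 1 * v' 2 - (u' 2 * v t 1 + u t 2 * v' 1)
    ring
  · show cross3 u' (v t) 1 + cross3 (u t) v' 1 = _
    rw [cross3_one', cross3_one']
    show _ = u' 2 * v t 0 + u t 2 * v' 0 - (u' 0 * v t 2 + u t 0 * v' 2)
    ring
  · show cross3 u' (v t) 2 + cross3 (u t) v' 2 = _
    rw [cross3_two', cross3_two']
    show _ = u' 0 * v t 1 + u t 0 * v' 1 - (u' 1 * v t 0 + u t 1 * v' 0)
    ring
/-- the image of a smooth biregular space curve lies in an affine plane
iff `det(γ', γ'', γ''') = 0` identically. -/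
theorem planar_iff_triple_product_zero (γ : ℝ → EuclideanSpace ℝ (Fin 3))
    (hγ : ContDiff ℝ (⊤ : ℕ∞) γ)
    (hbireg : ∀ t, LinearIndependent ℝ ![deriv γ t, deriv (deriv γ) t]) :
    (∃ (n : EuclideanSpace ℝ (Fin 3)) (c : ℝ), n ≠ 0 ∧ ∀ t, ⟪γ t, n⟫ = c) ↔
      (∀ t, det3 (deriv γ t) (deriv (deriv γ) t) (deriv (deriv (deriv γ)) t) = 0) := by
  have hγ' : ContDiff ℝ ((⊤ : ℕ∞) : WithTop ℕ∞) γ := hγ.of_le (by simp)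
  obtain ⟨hγdiff, hfC⟩ := contDiff_infty_iff_deriv.mp hγ'
  obtain ⟨hfdiff, hgC⟩ := contDiff_infty_iff_deriv.mp hfC
  obtain ⟨hgdiff, hhC⟩ := contDiff_infty_iff_deriv.mp hgC
  set f := deriv γ with hfdef
  set g := deriv (deriv γ) with hgdef
  set h := deriv (deriv (deriv γ)) with hhdef
  have hdγ : ∀ t, HasDerivAt γ (f t) t := fun t => hγdiff.differentiableAt.hasDerivAt
  have hdf : ∀ t, HasDerivAt f (g t) t := fun t => hfdiff.differentiableAt.hasDerivAt
  have hdg : ∀ t, HasDerivAt g (h t) t := fun t => hgdiff.differentiableAt.hasDerivAt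
  constructor
  · rintro ⟨n, c, hn, hc⟩ t
    have key : ∀ (w w' : ℝ → E3), (∀ s, HasDerivAt w (w' s) s) →
        (∃ c₀ : ℝ, ∀ s, ⟪w s, n⟫ = c₀) → ∀ s, ⟪w' s, n⟫ = 0 := by
      rintro w w' hw ⟨c₀, hw0⟩ s
      have H1 : HasDerivAt (fun τ => ⟪w τ, n⟫) (⟪w s, (0 : E3)⟫ + ⟪w' s, n⟫) s :=
        HasDerivAt.inner ℝ (hw s) (hasDerivAt_const s n)
      rw [show (fun τ => (⟪w τ, n⟫ : ℝ)) = fun _ => c₀ from funext hw0] at H1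
      have h0 := H1.unique (hasDerivAt_const s c₀)
      simpa using h0
    have hf0 : ∀ s, ⟪f s, n⟫ = 0 := key γ f hdγ ⟨c, hc⟩
    have hg0 : ∀ s, ⟪g s, n⟫ = 0 := key f g hdf ⟨0, hf0⟩
    have hh0 : ∀ s, ⟪h s, n⟫ = 0 := key g h hdg ⟨0, hg0⟩
    obtain ⟨r, hr⟩ := exists_smul_of_cross_eq_zero hn (cross_cross_eq_zero (hf0 t) (hg0 t))
    show ⟪cross3 (f t) (g t), h t⟫ = 0
    rw [hr, real_inner_smul_left, real_inner_comm, hh0 t, mul_zero]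
  · intro hdet
    set B := fun t => cross3 (f t) (g t) with hBdef
    have hBne : ∀ t, B t ≠ 0 := fun t => cross_ne_zero_of_li (hbireg t)
    have hpar : ∀ t, ∃ β : ℝ, cross3 (f t) (h t) = β • B t := by
      intro t
      apply exists_smul_of_cross_eq_zero (hBne t)
      apply cross_cross_eq_zero
      · rw [real_inner_comm]
        exact inner_cross_left (f t) (g t)
      · rw [real_inner_comm]
        exact hdet t
    choose β hβ using hpar
    have hBd : ∀ t, HasDerivAt B (β t • B t) t := by
      intro t
      have H := hasDerivAt_cross (hdf t) (hdg t)
      rwa [cross3_self, zero_add, hβ t] at H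
    set u := fun t => (⟪B t, B t⟫ : ℝ) with hudef
    have hu_pos : ∀ t, 0 < u t := fun t =>
      lt_of_le_of_ne real_inner_self_nonneg (Ne.symm (inner_self_ne_zero.mpr (hBne t)))
    have hud : ∀ t, HasDerivAt u (2 * β t * u t) t := by
      intro t
      have H := HasDerivAt.inner ℝ (hBd t) (hBd t)
      refine H.congr_deriv (Eq.symm ?_)
      rw [real_inner_smul_left, real_inner_smul_right]
      show 2 * β t * ⟪B t, B t⟫ = _
      ring
    set s := fun t => Real.sqrt (u t) with hsdef
    have hs_pos : ∀ t, 0 < s t := fun t => Real.sqrt_pos.mpr (hu_pos t)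
    have hsd : ∀ t, HasDerivAt s (β t * s t) t := by
      intro t
      have H := (Real.hasDerivAt_sqrt (ne_of_gt (hu_pos t))).comp t (hud t)
      refine H.congr_deriv (Eq.symm ?_)
      have hsne : s t ≠ 0 := ne_of_gt (hs_pos t)
      rw [show Real.sqrt (u t) = s t from rfl,
        show u t = s t * s t from (Real.mul_self_sqrt (le_of_lt (hu_pos t))).symm]
      field_simp
    set b := fun t => (s t)⁻¹ • B t with hbdef
    have hbd : ∀ t, HasDerivAt b 0 t := by
      intro t
      have hinv : HasDerivAt (fun τ => (s τ)⁻¹) (-(β t * s t) / (s t) ^ 2) t :=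
        (hsd t).inv (ne_of_gt (hs_pos t))
      have H := hinv.smul (hBd t)
      refine H.congr_deriv (Eq.symm ?_)
      rw [smul_smul, ← add_smul]
      have hz : (s t)⁻¹ * β t + -(β t * s t) / (s t) ^ 2 = 0 := by
        have hsne : s t ≠ 0 := ne_of_gt (hs_pos t)
        field_simp
        ring
      rw [hz, zero_smul]
    have hbconst : ∀ t, b t = b 0 := fun t =>
      is_const_of_deriv_eq_zero (fun x => (hbd x).differentiableAt)
        (fun x => (hbd x).deriv) t 0
    refine ⟨b 0, ⟪γ 0, b 0⟫, ?_, ?_⟩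
    · exact smul_ne_zero (inv_ne_zero (ne_of_gt (hs_pos 0))) (hBne 0)
    · have hderiv0 : ∀ t, HasDerivAt (fun τ => (⟪γ τ, b 0⟫ : ℝ)) 0 t := by
        intro t
        have H := HasDerivAt.inner ℝ (hdγ t) (hasDerivAt_const t (b 0))
        have hv : (⟪γ t, (0 : E3)⟫ : ℝ) + ⟪f t, b 0⟫ = 0 := by
          rw [inner_zero_right, ← hbconst t]
          show (0 : ℝ) + ⟪f t, (s t)⁻¹ • B t⟫ = 0
          rw [real_inner_smul_right, real_inner_comm]
          show 0 + (s t)⁻¹ * ⟪cross3 (f t) (g t), f t⟫ = 0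
          rw [inner_cross_left, mul_zero, add_zero]
        rwa [hv] at H
      intro t
      exact is_const_of_deriv_eq_zero (fun x => (hderiv0 x).differentiableAt)
        (fun x => (hderiv0 x).deriv) t 0
end
end

section
/- Let B be a symmetric bilinear form on Euclidean ℝ² and set q(u) := B(u,u). Suppose u₊ and u₋ are unit vectors such that q(u₋) ≤ q(w) ≤ q(u₊) for every unit vector w. Then for every unit vector u, q(u) = q(u₊) · ⟨u, u₊⟩² + q(u₋) · (1 − ⟨u, u₊⟩²); equivalently, writing φ for the angle between u and u₊, q(u) = q(u₊) cos²φ + q(u₋) sin²φ. -/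
open scoped RealInnerProductSpace

noncomputable section

/-- Auxiliary: if `2csb ≤ s²K` on the unit circle with `K ≥ 0`, then `b ≤ 0`. -/
theorem euler_aux_nonpos (K b' : ℝ) (hK : 0 ≤ K)
    (H : ∀ c s : ℝ, c ^ 2 + s ^ 2 = 1 → 2 * c * s * b' ≤ s ^ 2 * K) : b' ≤ 0 := by
  by_contra hb'
  push_neg at hb'
  set ε : ℝ := min (1/2) (b' / (2 * K + 1)) with hεdef
  have hd : (0:ℝ) < 2 * K + 1 := by linarith
  have hεpos : 0 < ε := by
    apply lt_min (by norm_num)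
    exact div_pos hb' hd
  have hεle : ε ≤ 1/2 := min_le_left _ _
  have hεd : ε * (2 * K + 1) ≤ b' := by
    have := min_le_right (1/2 : ℝ) (b' / (2 * K + 1))
    calc ε * (2 * K + 1) ≤ (b' / (2 * K + 1)) * (2 * K + 1) :=
          mul_le_mul_of_nonneg_right this (le_of_lt hd)
      _ = b' := div_mul_cancel₀ b' (ne_of_gt hd)
  set c : ℝ := Real.sqrt (1 - ε ^ 2) with hcdef
  have hc2 : c ^ 2 = 1 - ε ^ 2 := Real.sq_sqrt (by nlinarith)
  have hcge : (1/2 : ℝ) ≤ c := by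
    rw [hcdef]
    rw [show (1/2 : ℝ) = Real.sqrt ((1/2)^2) by rw [Real.sqrt_sq (by norm_num)]]
    apply Real.sqrt_le_sqrt
    nlinarith
  have hHc := H c ε (by linarith)
  have h1 : ε * b' ≤ ε * (ε * K) := by nlinarith [mul_pos hεpos hb']
  have h2 : b' ≤ ε * K := le_of_mul_le_mul_left (by linarith [h1]) hεpos
  have h3 : ε * K < b' := by
    nlinarith [mul_pos hεpos (show (0:ℝ) < K + 1 by linarith)]
  linarith

set_option maxHeartbeats 1600000 in
/-- Euler-type decomposition of a planar quadratic form: if the quadratic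
form `q(u) = B(u,u)` of a symmetric bilinear form `B` on Euclidean ℝ² attains its maximum
over unit vectors at `u₊` and its minimum at `u₋`, then for every unit vector `u`,
`q(u) = q(u₊)⟨u,u₊⟩² + q(u₋)(1 − ⟨u,u₊⟩²)`. -/
theorem euler_formula_quadratic_form
    (B : EuclideanSpace ℝ (Fin 2) →ₗ[ℝ] EuclideanSpace ℝ (Fin 2) →ₗ[ℝ] ℝ)
    (hsymm : ∀ u v, B u v = B v u)
    (up um : EuclideanSpace ℝ (Fin 2)) (hup : ‖up‖ = 1) (hum : ‖um‖ = 1)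
    (hext : ∀ w : EuclideanSpace ℝ (Fin 2), ‖w‖ = 1 → B um um ≤ B w w ∧ B w w ≤ B up up)
    (u : EuclideanSpace ℝ (Fin 2)) (hu : ‖u‖ = 1) :
    B u u = B up up * ⟪u, up⟫ ^ 2 + B um um * (1 - ⟪u, up⟫ ^ 2) := by
  -- components of unit vectors
  have hsq : ∀ w : EuclideanSpace ℝ (Fin 2), ‖w‖ = 1 → w 0 ^ 2 + w 1 ^ 2 = 1 := by
    intro w hw
    have h : ⟪w, w⟫ = 1 := by rw [real_inner_self_eq_norm_sq, hw]; norm_num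
    simp only [PiLp.inner_apply, RCLike.inner_apply, Fin.sum_univ_two, conj_trivial] at h
    nlinarith [h]
  have h01 : up 0 ^ 2 + up 1 ^ 2 = 1 := hsq up hup
  -- the orthogonal companion of up
  set v : EuclideanSpace ℝ (Fin 2) := WithLp.toLp 2 ![-(up 1), up 0] with hvdef
  have hv0 : v 0 = -(up 1) := rfl
  have hv1 : v 1 = up 0 := rfl
  have hvnorm : ‖v‖ = 1 := by
    have h2 : ‖v‖ ^ 2 = 1 := by
      rw [← real_inner_self_eq_norm_sq]
      simp only [PiLp.inner_apply, RCLike.inner_apply, Fin.sum_univ_two, conj_trivial,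
        hv0, hv1]
      nlinarith [h01]
    have h3 : (‖v‖ - 1) * (‖v‖ + 1) = 0 := by linear_combination h2
    rcases mul_eq_zero.mp h3 with h | h
    · linarith
    · nlinarith [norm_nonneg v]
  -- abbreviations
  set A := B up up with hA
  set C := B v v with hC
  set b := B up v with hb
  -- every vector is a combination of up and v
  have hrep : ∀ w : EuclideanSpace ℝ (Fin 2), w = ⟪w, up⟫ • up + ⟪w, v⟫ • v := by
    intro w
    ext i
    fin_cases i <;>
      simp only [Fin.mk_zero, Fin.mk_one, Fin.isValue, PiLp.add_apply, PiLp.smul_apply,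
        smul_eq_mul, PiLp.inner_apply, RCLike.inner_apply, Fin.sum_univ_two,
        conj_trivial, hv0, hv1] <;>
      [linear_combination (-(w 0)) * h01; linear_combination (-(w 1)) * h01]
  -- expansion of the quadratic form
  have hBexp : ∀ c s : ℝ, B (c • up + s • v) (c • up + s • v)
      = c ^ 2 * A + 2 * c * s * b + s ^ 2 * C := by
    intro c s
    simp only [map_add, map_smul, LinearMap.add_apply, LinearMap.smul_apply, smul_eq_mul]
    rw [hsymm v up]
    ring
  -- combinations with c²+s²=1 are unit vectors
  have hunit : ∀ c s : ℝ, c ^ 2 + s ^ 2 = 1 → ‖c • up + s • v‖ = 1 := by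
    intro c s hcs
    have h2 : ‖c • up + s • v‖ ^ 2 = 1 := by
      rw [← real_inner_self_eq_norm_sq]
      simp only [PiLp.inner_apply, RCLike.inner_apply, Fin.sum_univ_two, conj_trivial,
        PiLp.add_apply, PiLp.smul_apply, smul_eq_mul, hv0, hv1]
      nlinarith [h01, hcs]
    have h3 : (‖c • up + s • v‖ - 1) * (‖c • up + s • v‖ + 1) = 0 := by linear_combination h2
    rcases mul_eq_zero.mp h3 with h | h
    · linarith
    · nlinarith [norm_nonneg (c • up + s • v)]
  -- coefficients of a unit vector lie on the unit circle
  have hcoef : ∀ w : EuclideanSpace ℝ (Fin 2), ‖w‖ = 1 →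
      ⟪w, up⟫ ^ 2 + ⟪w, v⟫ ^ 2 = 1 := by
    intro w hw
    have hw' := hsq w hw
    simp only [PiLp.inner_apply, RCLike.inner_apply, Fin.sum_univ_two, conj_trivial,
      hv0, hv1]
    linear_combination (up 0 ^ 2 + up 1 ^ 2) * hw' + h01
  -- C ≤ A and C ≥ B um um
  have hvext := hext v hvnorm
  have hK : 0 ≤ A - C := by linarith [hvext.2]
  set K := A - C with hKdef
  -- the mixed term vanishes
  have hH : ∀ c s : ℝ, c ^ 2 + s ^ 2 = 1 → 2 * c * s * b ≤ s ^ 2 * K := by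
    intro c s hcs
    have h := (hext _ (hunit c s hcs)).2
    rw [hBexp] at h
    have e : c ^ 2 = 1 - s ^ 2 := by linarith
    rw [e] at h
    nlinarith [h]
  have hb0 : b = 0 := by
    have h1 : b ≤ 0 := euler_aux_nonpos K b hK hH
    have h2 : -b ≤ 0 := by
      apply euler_aux_nonpos K (-b) hK
      intro c s hcs
      have := hH c (-s) (by nlinarith)
      nlinarith [this]
    linarith
  -- value of the form on any unit vector
  have hval : ∀ w : EuclideanSpace ℝ (Fin 2), ‖w‖ = 1 →
      B w w = ⟪w, up⟫ ^ 2 * A + ⟪w, v⟫ ^ 2 * C := by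
    intro w hw
    have := hBexp ⟪w, up⟫ ⟪w, v⟫
    rw [← hrep w] at this
    rw [this, hb0]
    ring
  -- C = B um um
  have hCum : C = B um um := by
    have h1 := (hext v hvnorm).1
    have h2 := hval um hum
    have h3 := hcoef um hum
    have h6 : 0 ≤ (⟪um, up⟫ : ℝ) ^ 2 * (A - C) := mul_nonneg (sq_nonneg _) hK
    have h7 : ((⟪um, up⟫ : ℝ) ^ 2 + (⟪um, v⟫ : ℝ) ^ 2) * C = C := by rw [h3, one_mul]
    nlinarith [h1, h2, h3, h6, h7]
  -- finish
  have h4 := hval u hu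
  have h5 := hcoef u hu
  rw [h4, ← hCum]
  linear_combination C * h5
end
end
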